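/- arXiv:0710.3924 — 4 statements merged into one kernel-verified Lean document; each statement's English description precedes it below -/
import Mathlib

section
/- Let V be a finite-dimensional real vector space, W = V ⊕ V*, and let 𝒥 be a linear generalized complex structure on V. Then there exists a linear generalized complex structure 𝒥′ on V such that 𝒥𝒥′ = 𝒥′𝒥 and the bilinear form (u, v) ↦ ⟨−𝒥𝒥′(u), v⟩ is positive definite, i.e., ⟨−𝒥𝒥′(u), u⟩ > 0 for every nonzero u ∈ W. (This is the pointwise content of the lemma that every H-twisted generalized complex manifold admits a compatible generalized almost complex structure.) -/
/-- For a real vector space `V`, we model `W = V ⊕ V*` as `V × (V →ₗ[ℝ] ℝ)`.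
The natural pairing `⟨X + ξ, Y + η⟩ = (1/2)(η(X) + ξ(Y))`. -/
noncomputable def naturalPairing (V : Type*) [AddCommGroup V] [Module ℝ V] :
    (V × (V →ₗ[ℝ] ℝ)) → (V × (V →ₗ[ℝ] ℝ)) → ℝ :=
  fun u v => (v.2 u.1 + u.2 v.1) / 2

/-- A linear generalized complex structure on `V`: a linear map `𝒥 : W → W` with
`𝒥² = -id` preserving the natural pairing. -/
def IsLinearGCS {V : Type*} [AddCommGroup V] [Module ℝ V]
    (J : (V × (V →ₗ[ℝ] ℝ)) →ₗ[ℝ] (V × (V →ₗ[ℝ] ℝ))) : Prop :=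
  J ∘ₗ J = -LinearMap.id ∧
  ∀ u v, naturalPairing V (J u) (J v) = naturalPairing V u v

/-!
Choose an inner product on `W` for which `𝒥` is orthogonal (average any inner product over
`{1, 𝒥}`). The pairing is then `⟪A u, v⟫` for a symmetric, invertible `A` commuting with `𝒥`,
and `G = sign A`, a polynomial in `A`, is an involution that commutes with `𝒥`, preserves the
pairing and satisfies `⟨G u, u⟩ = ⟪|A| u, u⟫ > 0` for `u ≠ 0`. Then `𝒥′ = G𝒥` works, since
`-𝒥𝒥′ = G`.
-/

open scoped RealInnerProductSpace

lemma LinearMap.BilinForm.apply_map_left_eq_neg_apply_map_right {R M : Type*} [CommRing R]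
    [AddCommGroup M] [Module R M] (b : LinearMap.BilinForm R M) {J : Module.End R M}
    (hJ : J * J = -1) (hJb : ∀ u v, b (J u) (J v) = b u v) (u v : M) : b (J u) v = -b u (J v) := by
  have hv : J (J v) = -v := by simpa using LinearMap.congr_fun hJ v
  rw [← hJb u, hv, map_neg, neg_neg]

section Spectral

variable {E : Type*} [NormedAddCommGroup E] [InnerProductSpace ℝ E]

namespace OrthonormalBasis

variable {ι : Type*} [Fintype ι] (e : OrthonormalBasis ι ℝ E) {T : E →ₗ[ℝ] E} {c : ι → ℝ}

lemma inner_apply_eq_sum_of_apply_eq_smul (hT : ∀ i, T (e i) = c i • e i) (u v : E) :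
    ⟪T u, v⟫ = ∑ i, c i * (⟪e i, u⟫ * ⟪e i, v⟫) := by
  conv_lhs => rw [← e.sum_repr' u]
  simp only [map_sum, map_smul, hT, smul_smul, sum_inner, real_inner_smul_left]
  exact Finset.sum_congr rfl fun i _ => by ring

lemma isSymmetric_of_apply_eq_smul (hT : ∀ i, T (e i) = c i • e i) : T.IsSymmetric :=
  fun u v => by
    rw [real_inner_comm (T v) u, e.inner_apply_eq_sum_of_apply_eq_smul hT,
      e.inner_apply_eq_sum_of_apply_eq_smul hT]
    simp only [mul_comm (⟪e _, u⟫)]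

lemma inner_apply_self_pos_of_apply_eq_smul (hT : ∀ i, T (e i) = c i • e i) (hc : ∀ i, 0 < c i)
    {u : E} (hu : u ≠ 0) : 0 < ⟪T u, u⟫ := by
  obtain ⟨i, hi⟩ : ∃ i, ⟪e i, u⟫ ≠ 0 := by
    by_contra! h
    exact hu (by simpa [h] using (e.sum_repr' u).symm)
  rw [e.inner_apply_eq_sum_of_apply_eq_smul hT]
  exact Finset.sum_pos' (fun j _ => mul_nonneg (hc j).le (mul_self_nonneg _))
    ⟨i, Finset.mem_univ i, mul_pos (hc i) (mul_self_pos.mpr hi)⟩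

end OrthonormalBasis

theorem LinearMap.IsSymmetric.exists_sign_mem_adjoin [FiniteDimensional ℝ E] {A : E →ₗ[ℝ] E}
    (hA : A.IsSymmetric) (hA_inj : Function.Injective A) :
    ∃ G ∈ Algebra.adjoin ℝ {A}, G * G = 1 ∧ (A * G).IsSymmetric ∧
      ∀ u, u ≠ 0 → 0 < ⟪(A * G) u, u⟫ := by
  obtain ⟨e, μ, hAe⟩ : ∃ (e : OrthonormalBasis (Fin (Module.finrank ℝ E)) ℝ E) (μ : _ → ℝ),
      ∀ i, A (e i) = μ i • e i :=
    ⟨hA.eigenvectorBasis rfl, hA.eigenvalues rfl, hA.apply_eigenvectorBasis rfl⟩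
  have hμ : ∀ i, μ i ≠ 0 := fun i hi =>
    e.toBasis.ne_zero i (hA_inj (by simp [hAe, hi]))
  -- `G = sign A`, realised as a polynomial in `A` interpolating `sign` on the eigenvalues
  obtain ⟨p, hp⟩ := (Polynomial.exists_eval_eq_iff μ (Real.sign ∘ μ)).2 fun i j h => by simp [h]
  have hG : ∀ i, Polynomial.aeval A p (e i) = Real.sign (μ i) • e i := fun i => by
    rw [Module.End.aeval_apply_of_mem_apply_eq_smul (hAe i), hp, Function.comp_apply]
  have hAG : ∀ i, (A * Polynomial.aeval A p) (e i) = (Real.sign (μ i) * μ i) • e i := fun i => by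
    rw [Module.End.mul_apply, hG, map_smul, hAe, smul_smul]
  have hGG : Polynomial.aeval A p * Polynomial.aeval A p = 1 := e.toBasis.ext fun i => by
    rcases Real.sign_apply_eq_of_ne_zero _ (hμ i) with h | h <;> simp [hG, h]
  have hsign_mul_pos : ∀ i, 0 < Real.sign (μ i) * μ i := fun i =>
    Real.sign_mul_pos_of_ne_zero _ (hμ i)
  exact ⟨_, Polynomial.aeval_mem_adjoin_singleton ℝ A, hGG, e.isSymmetric_of_apply_eq_smul hAG,
    fun u hu => e.inner_apply_self_pos_of_apply_eq_smul hAG hsign_mul_pos hu⟩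

lemma LinearMap.BilinForm.exists_inner_apply_eq [FiniteDimensional ℝ E]
    (b : LinearMap.BilinForm ℝ E) : ∃ A : E →ₗ[ℝ] E, ∀ u v, ⟪A u, v⟫ = b u v :=
  ⟨(InnerProductSpace.toDual ℝ E).symm.toLinearEquiv.toLinearMap ∘ₗ
      LinearMap.toContinuousLinearMap.toLinearMap ∘ₗ b,
    fun _ _ => InnerProductSpace.toDual_symm_apply⟩

theorem LinearMap.BilinForm.exists_involution_commute_isometry_pos [FiniteDimensional ℝ E]
    (b : LinearMap.BilinForm ℝ E) (hb : b.IsSymm) (hb_sep : b.SeparatingLeft)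
    (J : Module.End ℝ E) (hJ : J * J = -1) (hJb : ∀ u v, b (J u) (J v) = b u v)
    (hJi : ∀ u v, ⟪J u, J v⟫ = ⟪u, v⟫) :
    ∃ G : Module.End ℝ E, G * G = 1 ∧ Commute J G ∧ (∀ u v, b (G u) (G v) = b u v) ∧
      ∀ u, u ≠ 0 → 0 < b (G u) u := by
  obtain ⟨A, hA⟩ := b.exists_inner_apply_eq
  have hA_symm : A.IsSymmetric := fun u v => by rw [hA, hb.eq, ← hA, real_inner_comm]
  have hA_inj : Function.Injective A := (injective_iff_map_eq_zero A).2 fun u hu =>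
    hb_sep u fun v => by rw [← hA, hu, inner_zero_left]
  have hJ_inner : ∀ u v, ⟪J u, v⟫ = -⟪u, J v⟫ :=
    LinearMap.BilinForm.apply_map_left_eq_neg_apply_map_right (innerₗ E) hJ hJi
  have hJA : Commute J A := LinearMap.ext fun u => ext_inner_right ℝ fun v => by
    rw [Module.End.mul_apply, Module.End.mul_apply, hJ_inner, hA, hA,
      b.apply_map_left_eq_neg_apply_map_right hJ hJb]
  obtain ⟨G, hG_mem, hGG, hAG_symm, hAG_pos⟩ := hA_symm.exists_sign_mem_adjoin hA_inj
  refine ⟨G, hGG, Algebra.commute_of_mem_adjoin_singleton_of_commute hG_mem hJA,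
    fun u v => ?_, fun u hu => by simpa only [← hA, Module.End.mul_apply] using hAG_pos u hu⟩
  rw [← hA, ← Module.End.mul_apply, hAG_symm, Module.End.mul_apply, ← Module.End.mul_apply G, hGG,
    Module.End.one_apply, ← hA_symm, hA]

end Spectral

lemma exists_injective_inner_map_eq_of_mul_self_eq_neg_one {W F : Type*} [AddCommGroup W]
    [Module ℝ W] [NormedAddCommGroup F] [InnerProductSpace ℝ F] {e : W →ₗ[ℝ] F}
    (he : Function.Injective e) {J : Module.End ℝ W} (hJ : J * J = -1) :
    ∃ f : W →ₗ[ℝ] WithLp 2 (F × F), Function.Injective f ∧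
      ∀ u v, ⟪f (J u), f (J v)⟫ = ⟪f u, f v⟫ := by
  have hJJ : ∀ u, J (J u) = -u := fun u => by simpa using LinearMap.congr_fun hJ u
  refine ⟨(WithLp.linearEquiv 2 ℝ (F × F)).symm.toLinearMap ∘ₗ e.prod (e ∘ₗ J),
    fun u v h => he congr(($h).fst), fun u v => ?_⟩
  simp [hJJ, add_comm]

noncomputable def naturalPairingForm (V : Type*) [AddCommGroup V] [Module ℝ V] :
    LinearMap.BilinForm ℝ (V × (V →ₗ[ℝ] ℝ)) :=
  LinearMap.mk₂ ℝ (naturalPairing V)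
    (fun _ _ _ => by simp [naturalPairing]; ring)
    (fun _ _ _ => by simp [naturalPairing]; ring)
    (fun _ _ _ => by simp [naturalPairing]; ring)
    (fun _ _ _ => by simp [naturalPairing]; ring)

section NaturalPairing

variable {V : Type*} [AddCommGroup V] [Module ℝ V]

@[simp]
lemma naturalPairingForm_apply (u v : V × (V →ₗ[ℝ] ℝ)) :
    naturalPairingForm V u v = naturalPairing V u v := rfl

lemma isSymm_naturalPairingForm : (naturalPairingForm V).IsSymm :=
  ⟨fun u v => by simp only [naturalPairingForm_apply, naturalPairing, add_comm]⟩

lemma separatingLeft_naturalPairingForm [FiniteDimensional ℝ V] :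
    (naturalPairingForm V).SeparatingLeft := by
  intro u hu
  have h₂ : u.2 = 0 := LinearMap.ext fun Y => by simpa [naturalPairing] using hu (Y, 0)
  have h₁ : u.1 = 0 := (Module.forall_dual_apply_eq_zero_iff ℝ u.1).1 fun φ => by
    simpa [naturalPairing, h₂] using hu (0, φ)
  exact Prod.ext h₁ h₂

end NaturalPairing

/-- Every linear generalized complex structure `𝒥` admits a compatible one `𝒥′`:
`𝒥′` commutes with `𝒥` and `⟨-𝒥𝒥′(u), u⟩ > 0` for every nonzero `u`. -/
theorem exists_compatible_linearGCS (V : Type*) [AddCommGroup V] [Module ℝ V]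
    [FiniteDimensional ℝ V]
    (J : (V × (V →ₗ[ℝ] ℝ)) →ₗ[ℝ] (V × (V →ₗ[ℝ] ℝ))) (hJ : IsLinearGCS J) :
    ∃ J' : (V × (V →ₗ[ℝ] ℝ)) →ₗ[ℝ] (V × (V →ₗ[ℝ] ℝ)),
      IsLinearGCS J' ∧
      J ∘ₗ J' = J' ∘ₗ J ∧
      ∀ u, u ≠ 0 → 0 < naturalPairing V (-(J (J' u))) u := by
  obtain ⟨hJJ, hJb⟩ := hJ
  have hJ2 : J * J = -1 := hJJ
  let e := (Module.finBasis ℝ (V × (V →ₗ[ℝ] ℝ))).equivFun.trans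
    (EuclideanSpace.equiv (Fin _) ℝ).symm.toLinearEquiv
  obtain ⟨f, hf, hfJ⟩ := exists_injective_inner_map_eq_of_mul_self_eq_neg_one e.injective hJ2
  let _ := NormedAddCommGroup.induced _ _ f hf
  let _ := InnerProductSpace.induced f
  obtain ⟨G, hGG, hJG, hGb, hG_pos⟩ := (naturalPairingForm V).exists_involution_commute_isometry_pos
    isSymm_naturalPairingForm separatingLeft_naturalPairingForm J hJ2 hJb hfJ
  have hJGJ : ∀ u, -(J (G (J u))) = G u := fun u => by
    rw [← Module.End.mul_apply J G, hJG.eq, Module.End.mul_apply, ← Module.End.mul_apply J, hJ2]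
    simp
  refine ⟨G * J, ⟨?_, fun u v => ?_⟩, ?_, fun u hu => ?_⟩
  · change G * J * (G * J) = -1
    rw [mul_assoc, ← mul_assoc J, hJG.eq, mul_assoc, ← mul_assoc, hGG, one_mul, hJ2]
  · simpa using (hGb (J u) (J v)).trans (hJb u v)
  · change J * (G * J) = G * J * J
    rw [← mul_assoc, hJG.eq]
  · simpa [hJGJ] using hG_pos u hu
end

section
/- Let V be a finite-dimensional real vector space, g an inner product on V viewed as an isomorphism g : V → V*, and J : V → V a linear map with J² = −id which is orthogonal for g. Set ω := g ∘ J : V → V*, which is skew and invertible. Then the linear generalized complex structures 𝒥_J(X + ξ) = J(X) − J*(ξ) and 𝒥_ω(X + ξ) = −ω⁻¹(ξ) + ω(X) commute, and 𝒢 := −𝒥_J 𝒥_ω is given by 𝒢(X + ξ) = g⁻¹(ξ) + g(X) and satisfies ⟨𝒢(u), u⟩ > 0 for every nonzero u ∈ V ⊕ V*. In particular (𝒥_J, 𝒥_ω) is a linear generalized Kähler pair. -/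
/-- The generalized complex structure `𝒥_J(X + ξ) = J(X) - J*(ξ)` associated to a
complex structure `J` on `V`. -/
noncomputable def gcsOfComplex {V : Type*} [AddCommGroup V] [Module ℝ V]
    (J : V →ₗ[ℝ] V) : (V × (V →ₗ[ℝ] ℝ)) →ₗ[ℝ] (V × (V →ₗ[ℝ] ℝ)) :=
  LinearMap.prodMap J (-(LinearMap.dualMap J))

/-- The generalized complex structure `𝒥_ω(X + ξ) = -ω⁻¹(ξ) + ω(X)` associated to an
invertible skew map `ω : V → V*` with given inverse `ωinv`. -/
noncomputable def gcsOfSymplectic' {V : Type*} [AddCommGroup V] [Module ℝ V]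
    (ω : V →ₗ[ℝ] (V →ₗ[ℝ] ℝ)) (ωinv : (V →ₗ[ℝ] ℝ) →ₗ[ℝ] V) :
    (V × (V →ₗ[ℝ] ℝ)) →ₗ[ℝ] (V × (V →ₗ[ℝ] ℝ)) :=
  LinearMap.prod
    (-(ωinv ∘ₗ LinearMap.snd ℝ V (V →ₗ[ℝ] ℝ)))
    (ω ∘ₗ LinearMap.fst ℝ V (V →ₗ[ℝ] ℝ))

/-!
In the splitting `W = V ⊕ V*`, `𝒥_J` is block diagonal and `𝒥_ω` block anti-diagonal, so
`𝒥_J 𝒥_ω = 𝒥_ω 𝒥_J` amounts to `ω(JX, Y) = -ω(X, JY)`, i.e. to the `J`-invariance of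
`ω = g ∘ J`, which is the orthogonality of `J`. The product `-𝒥_J 𝒥_ω` is then the
anti-diagonal map `(g⁻¹, g)`, and `⟨𝒢(X + ξ), X + ξ⟩ = (g(X, X) + g⁻¹(ξ, ξ)) / 2` is positive
definite because `g` is.
-/

theorem LinearMap.apply_apply_of_comp_self_eq_neg_id {R M : Type*} [Semiring R]
    [AddCommGroup M] [Module R M] {J : M →ₗ[R] M} (hJ : J ∘ₗ J = -LinearMap.id) (x : M) :
    J (J x) = -x := by
  simpa using LinearMap.congr_fun hJ x

theorem LinearMap.bijective_of_comp_self_eq_neg_id {R M : Type*} [Semiring R]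
    [AddCommGroup M] [Module R M] {J : M →ₗ[R] M} (hJ : J ∘ₗ J = -LinearMap.id) :
    Function.Bijective J :=
  Function.bijective_iff_has_inverse.mpr ⟨fun x => -J x,
    fun x => by simp [J.apply_apply_of_comp_self_eq_neg_id hJ],
    fun x => by simp [J.apply_apply_of_comp_self_eq_neg_id hJ]⟩

section

variable {V : Type*} [AddCommGroup V] [Module ℝ V]

@[simp]
theorem gcsOfComplex_apply (J : V →ₗ[ℝ] V) (u : V × (V →ₗ[ℝ] ℝ)) :
    gcsOfComplex J u = (J u.1, -(u.2 ∘ₗ J)) :=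
  rfl

@[simp]
theorem gcsOfSymplectic'_apply (ω : V →ₗ[ℝ] (V →ₗ[ℝ] ℝ)) (ωinv : (V →ₗ[ℝ] ℝ) →ₗ[ℝ] V)
    (u : V × (V →ₗ[ℝ] ℝ)) : gcsOfSymplectic' ω ωinv u = (-ωinv u.2, ω u.1) :=
  rfl

theorem isLinearGCS_gcsOfComplex {J : V →ₗ[ℝ] V} (hJ : J ∘ₗ J = -LinearMap.id) :
    IsLinearGCS (gcsOfComplex J) := by
  have hJJ := J.apply_apply_of_comp_self_eq_neg_id hJ
  refine ⟨?_, fun u v => ?_⟩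
  · ext u <;> simp [hJJ]
  · simp [naturalPairing, hJJ]

section Symplectic

variable {ω : V →ₗ[ℝ] (V →ₗ[ℝ] ℝ)} {ωinv : (V →ₗ[ℝ] ℝ) →ₗ[ℝ] V}

theorem isLinearGCS_gcsOfSymplectic' (hskew : ∀ X Y, ω X Y = -ω Y X)
    (hleft : ωinv ∘ₗ ω = LinearMap.id) (hright : ω ∘ₗ ωinv = LinearMap.id) :
    IsLinearGCS (gcsOfSymplectic' ω ωinv) := by
  have hl (X : V) : ωinv (ω X) = X := LinearMap.congr_fun hleft X
  have hr (ξ : V →ₗ[ℝ] ℝ) : ω (ωinv ξ) = ξ := LinearMap.congr_fun hright ξ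
  refine ⟨?_, fun u v => ?_⟩
  · ext u <;> simp [hl, hr]
  · simp only [gcsOfSymplectic'_apply, naturalPairing, map_neg]
    rw [hskew u.1, hskew v.1, hr, hr]
    ring

theorem gcsOfComplex_comp_gcsOfSymplectic' {J : V →ₗ[ℝ] V}
    (hωJ : ∀ X Y, ω (J X) Y = -ω X (J Y))
    (hleft : ωinv ∘ₗ ω = LinearMap.id) (hright : ω ∘ₗ ωinv = LinearMap.id) :
    gcsOfComplex J ∘ₗ gcsOfSymplectic' ω ωinv = gcsOfSymplectic' ω ωinv ∘ₗ gcsOfComplex J := by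
  have hl (X : V) : ωinv (ω X) = X := LinearMap.congr_fun hleft X
  have hr (ξ : V →ₗ[ℝ] ℝ) : ω (ωinv ξ) = ξ := LinearMap.congr_fun hright ξ
  have hωinv : ∀ ξ, ωinv (ξ ∘ₗ J) = -J (ωinv ξ) := fun ξ => by
    have : ω (-J (ωinv ξ)) = ξ ∘ₗ J := by
      ext Y
      simp [hωJ, hr]
    rw [← this, hl]
  refine LinearMap.ext fun u => Prod.ext ?_ (LinearMap.ext fun Y => ?_)
  · simp [hωinv]
  · simp [hωJ]

end Symplectic

section Metric

variable {g : V ≃ₗ[ℝ] (V →ₗ[ℝ] ℝ)} {J : V →ₗ[ℝ] V}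

theorem metric_comp_complex_skew (hsymm : ∀ x y : V, g x y = g y x)
    (hJ : J ∘ₗ J = -LinearMap.id) (horth : ∀ x y : V, g (J x) (J y) = g x y) (X Y : V) :
    (g.toLinearMap ∘ₗ J) X Y = -((g.toLinearMap ∘ₗ J) Y X) := by
  have h := horth X (J Y)
  rw [J.apply_apply_of_comp_self_eq_neg_id hJ, map_neg, hsymm X] at h
  simp only [LinearMap.comp_apply, LinearEquiv.coe_coe]
  linarith

theorem metric_comp_complex_apply_complex (hJ : J ∘ₗ J = -LinearMap.id)
    (horth : ∀ x y : V, g (J x) (J y) = g x y) (X Y : V) :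
    (g.toLinearMap ∘ₗ J) (J X) Y = -((g.toLinearMap ∘ₗ J) X (J Y)) := by
  simp [J.apply_apply_of_comp_self_eq_neg_id hJ, horth]

theorem neg_gcsOfComplex_comp_gcsOfSymplectic'_apply {ωinv : (V →ₗ[ℝ] ℝ) →ₗ[ℝ] V}
    (horth : ∀ x y : V, g (J x) (J y) = g x y)
    (hright : (g.toLinearMap ∘ₗ J) ∘ₗ ωinv = LinearMap.id) (u : V × (V →ₗ[ℝ] ℝ)) :
    (-(gcsOfComplex J ∘ₗ gcsOfSymplectic' (g.toLinearMap ∘ₗ J) ωinv)) u =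
      (g.symm u.2, g u.1) := by
  have hJωinv : J (ωinv u.2) = g.symm u.2 :=
    g.eq_symm_apply.mpr (by simpa using LinearMap.congr_fun hright u.2)
  ext Y
  · simp [hJωinv]
  · simp [horth]

theorem naturalPairing_symm_snd_fst_pos (hpos : ∀ x : V, x ≠ 0 → 0 < g x x)
    {u : V × (V →ₗ[ℝ] ℝ)} (hu : u ≠ 0) : 0 < naturalPairing V (g.symm u.2, g u.1) u := by
  obtain ⟨X, ξ⟩ := u
  obtain ⟨Y, rfl⟩ := g.surjective ξ
  have hnonneg : ∀ x, 0 ≤ g x x := fun x => by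
    rcases eq_or_ne x 0 with rfl | hx
    · simp
    · exact (hpos x hx).le
  have hXY : X ≠ 0 ∨ Y ≠ 0 := by
    by_contra! h
    simp [h.1, h.2] at hu
  simp only [naturalPairing, LinearEquiv.symm_apply_apply]
  rcases hXY with hX | hY
  · linarith [hpos X hX, hnonneg Y]
  · linarith [hpos Y hY, hnonneg X]

end Metric

end

theorem kaehler_pair_of_complex_and_metric_general (V : Type*) [AddCommGroup V] [Module ℝ V]
    (g : V ≃ₗ[ℝ] (V →ₗ[ℝ] ℝ))
    (hsymm : ∀ x y : V, g x y = g y x)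
    (hpos : ∀ x : V, x ≠ 0 → 0 < g x x)
    (J : V →ₗ[ℝ] V) (hJ : J ∘ₗ J = -LinearMap.id)
    (horth : ∀ x y : V, g (J x) (J y) = g x y) :
    (∀ X Y : V, (g.toLinearMap ∘ₗ J) X Y = -((g.toLinearMap ∘ₗ J) Y X)) ∧
    Function.Bijective (g.toLinearMap ∘ₗ J) ∧
    ∀ ωinv : (V →ₗ[ℝ] ℝ) →ₗ[ℝ] V,
      ωinv ∘ₗ (g.toLinearMap ∘ₗ J) = LinearMap.id →
      (g.toLinearMap ∘ₗ J) ∘ₗ ωinv = LinearMap.id →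
        IsLinearGCS (gcsOfComplex J) ∧
        IsLinearGCS (gcsOfSymplectic' (g.toLinearMap ∘ₗ J) ωinv) ∧
        gcsOfComplex J ∘ₗ gcsOfSymplectic' (g.toLinearMap ∘ₗ J) ωinv =
          gcsOfSymplectic' (g.toLinearMap ∘ₗ J) ωinv ∘ₗ gcsOfComplex J ∧
        (∀ u : V × (V →ₗ[ℝ] ℝ),
          (-(gcsOfComplex J ∘ₗ gcsOfSymplectic' (g.toLinearMap ∘ₗ J) ωinv)) u =
            (g.symm u.2, g u.1)) ∧
        ∀ u : V × (V →ₗ[ℝ] ℝ), u ≠ 0 →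
          0 < naturalPairing V
            ((-(gcsOfComplex J ∘ₗ gcsOfSymplectic' (g.toLinearMap ∘ₗ J) ωinv)) u) u := by
  have hskew := metric_comp_complex_skew hsymm hJ horth
  refine ⟨hskew, g.bijective.comp (J.bijective_of_comp_self_eq_neg_id hJ),
    fun ωinv hleft hright => ?_⟩
  have hG := neg_gcsOfComplex_comp_gcsOfSymplectic'_apply horth hright
  refine ⟨isLinearGCS_gcsOfComplex hJ, isLinearGCS_gcsOfSymplectic' hskew hleft hright,
    gcsOfComplex_comp_gcsOfSymplectic' (metric_comp_complex_apply_complex hJ horth) hleft hright,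
    hG, fun u hu => ?_⟩
  rw [hG]
  exact naturalPairing_symm_snd_fst_pos hpos hu

/-- For an inner product `g` on `V` (viewed as an isomorphism `g : V → V*`) and a complex
structure `J` orthogonal for `g`, the map `ω = g ∘ J` is skew and invertible, `𝒥_J` and
`𝒥_ω` commute, and `𝒢 = -𝒥_J 𝒥_ω` is given by `𝒢(X + ξ) = g⁻¹(ξ) + g(X)` and satisfies
`⟨𝒢(u), u⟩ > 0` for all nonzero `u`; in particular `(𝒥_J, 𝒥_ω)` is a linear generalized
Kähler pair. -/
theorem kaehler_pair_of_complex_and_metric (V : Type*) [AddCommGroup V] [Module ℝ V]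
    [FiniteDimensional ℝ V]
    (g : V ≃ₗ[ℝ] (V →ₗ[ℝ] ℝ))
    (hsymm : ∀ x y : V, g x y = g y x)
    (hpos : ∀ x : V, x ≠ 0 → 0 < g x x)
    (J : V →ₗ[ℝ] V) (hJ : J ∘ₗ J = -LinearMap.id)
    (horth : ∀ x y : V, g (J x) (J y) = g x y) :
    (∀ X Y : V, (g.toLinearMap ∘ₗ J) X Y = -((g.toLinearMap ∘ₗ J) Y X)) ∧
    Function.Bijective (g.toLinearMap ∘ₗ J) ∧
    ∀ ωinv : (V →ₗ[ℝ] ℝ) →ₗ[ℝ] V,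
      ωinv ∘ₗ (g.toLinearMap ∘ₗ J) = LinearMap.id →
      (g.toLinearMap ∘ₗ J) ∘ₗ ωinv = LinearMap.id →
        IsLinearGCS (gcsOfComplex J) ∧
        IsLinearGCS (gcsOfSymplectic' (g.toLinearMap ∘ₗ J) ωinv) ∧
        gcsOfComplex J ∘ₗ gcsOfSymplectic' (g.toLinearMap ∘ₗ J) ωinv =
          gcsOfSymplectic' (g.toLinearMap ∘ₗ J) ωinv ∘ₗ gcsOfComplex J ∧
        (∀ u : V × (V →ₗ[ℝ] ℝ),
          (-(gcsOfComplex J ∘ₗ gcsOfSymplectic' (g.toLinearMap ∘ₗ J) ωinv)) u =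
            (g.symm u.2, g u.1)) ∧
        ∀ u : V × (V →ₗ[ℝ] ℝ), u ≠ 0 →
          0 < naturalPairing V
            ((-(gcsOfComplex J ∘ₗ gcsOfSymplectic' (g.toLinearMap ∘ₗ J) ωinv)) u) u :=
  kaehler_pair_of_complex_and_metric_general V g hsymm hpos J hJ horth
end

section
/- Let E be a finite-dimensional real inner product space, H : E → E a self-adjoint linear endomorphism, and K : E → E a skew-adjoint linear endomorphism with H K = K H. Then for every λ ∈ ℝ, if the restriction of K to the eigenspace E_λ = ker(H − λ·id) is injective, then dim_ℝ E_λ is even. (This is the linear-algebraic core of the claim that the nonzero eigenspaces of the Hessian of a generalized moment map component are even-dimensional, so that the index and coindex of each critical manifold are even.) -/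
/-!
`K` preserves `E_λ` because it commutes with `H`, and its restriction there is skew-adjoint and
invertible. Over `ℝ` a map and its adjoint have the same determinant, so
`det K = det (-K) = (-1) ^ dim E_λ * det K` with `det K ≠ 0`, which forces `dim E_λ` to be even.
-/

open Module

theorem LinearMap.det_adjoint {𝕜 E : Type*} [RCLike 𝕜] [NormedAddCommGroup E]
    [InnerProductSpace 𝕜 E] [FiniteDimensional 𝕜 E] (f : E →ₗ[𝕜] E) :
    LinearMap.det (LinearMap.adjoint f) = star (LinearMap.det f) := by
  let b := stdOrthonormalBasis 𝕜 E
  rw [← LinearMap.det_toMatrix b.toBasis, ← LinearMap.det_toMatrix b.toBasis,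
    LinearMap.toMatrix_adjoint b b, Matrix.det_conjTranspose]

theorem LinearMap.adjoint_restrict_eq_neg {𝕜 E : Type*} [RCLike 𝕜] [NormedAddCommGroup E]
    [InnerProductSpace 𝕜 E] [FiniteDimensional 𝕜 E] {K : E →ₗ[𝕜] E}
    (hK : LinearMap.adjoint K = -K) {p : Submodule 𝕜 E} (hp : ∀ x ∈ p, K x ∈ p) :
    LinearMap.adjoint (K.restrict hp) = -K.restrict hp := by
  refine ((LinearMap.eq_adjoint_iff _ _).mpr fun x y => ?_).symm
  have := LinearMap.adjoint_inner_left K y x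
  simp_all [Submodule.coe_inner]

theorem Module.even_finrank_of_det_neg_eq_det {K V : Type*} [Field K] [AddCommGroup V]
    [Module K V] [FiniteDimensional K V] (hK : ringChar K ≠ 2) (f : V →ₗ[K] V)
    (hf : LinearMap.det f ≠ 0) (hneg : LinearMap.det (-f) = LinearMap.det f) :
    Even (finrank K V) := by
  rw [← neg_one_smul K f, LinearMap.det_smul] at hneg
  have : (-1 : K) ^ finrank K V = 1 := mul_left_cancel₀ hf (by rw [mul_one, mul_comm, hneg])
  exact (neg_one_pow_eq_one_iff_even (Ring.neg_one_ne_one_of_char_ne_two hK)).mp this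

theorem LinearMap.even_finrank_of_adjoint_eq_neg_of_injective {E : Type*} [NormedAddCommGroup E]
    [InnerProductSpace ℝ E] [FiniteDimensional ℝ E] {K : E →ₗ[ℝ] E}
    (hK : LinearMap.adjoint K = -K) (hinj : Function.Injective K) : Even (finrank ℝ E) := by
  refine even_finrank_of_det_neg_eq_det (by simp) K ?_ ?_
  · exact (LinearEquiv.ofInjectiveEndo K hinj).isUnit_det'.ne_zero
  · rw [← hK, LinearMap.det_adjoint, star_trivial]

theorem eigenspace_even_dim_of_skewAdjoint_injective_general {E : Type*} [NormedAddCommGroup E]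
    [InnerProductSpace ℝ E] [FiniteDimensional ℝ E]
    (H K : E →ₗ[ℝ] E)
    (hK : LinearMap.adjoint K = -K)
    (hcomm : H ∘ₗ K = K ∘ₗ H) (lam : ℝ)
    (hinj : ∀ x ∈ LinearMap.ker (H - lam • LinearMap.id), K x = 0 → x = 0) :
    Even (Module.finrank ℝ ↥(LinearMap.ker (H - lam • LinearMap.id))) := by
  have hKV : Set.MapsTo K (End.eigenspace H lam) (End.eigenspace H lam) :=
    End.mapsTo_genEigenspace_of_comm hcomm lam 1
  rw [End.eigenspace_def] at hKV
  refine LinearMap.even_finrank_of_adjoint_eq_neg_of_injective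
    (LinearMap.adjoint_restrict_eq_neg hK hKV) ?_
  exact (injective_iff_map_eq_zero _).mpr fun x hx =>
    Subtype.ext (hinj x x.2 (congrArg Subtype.val hx))

/-- Linear-algebraic core of the evenness of index and coindex: if `H` is self-adjoint,
`K` is skew-adjoint, `H` and `K` commute, and `K` is injective on the `λ`-eigenspace of
`H`, then that eigenspace is even-dimensional. -/
theorem eigenspace_even_dim_of_skewAdjoint_injective {E : Type*} [NormedAddCommGroup E]
    [InnerProductSpace ℝ E] [FiniteDimensional ℝ E]
    (H K : E →ₗ[ℝ] E)
    (hH : LinearMap.adjoint H = H) (hK : LinearMap.adjoint K = -K)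
    (hcomm : H ∘ₗ K = K ∘ₗ H) (lam : ℝ)
    (hinj : ∀ x ∈ LinearMap.ker (H - lam • LinearMap.id), K x = 0 → x = 0) :
    Even (Module.finrank ℝ ↥(LinearMap.ker (H - lam • LinearMap.id))) :=
  eigenspace_even_dim_of_skewAdjoint_injective_general H K hK hcomm lam hinj
end

section
/- Let a₁, …, a_N ∈ ℝ^m and let a ∈ ℝ^m be a point not contained in the convex hull of {a₁, …, a_N}. Then there exists ξ ∈ ℝ^m whose coordinates ξ₁, …, ξ_m are linearly independent over ℚ such that ⟨a_i, ξ⟩ < ⟨a, ξ⟩ for all i = 1, …, N, where ⟨·,·⟩ denotes the standard inner product on ℝ^m. -/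
/-!
Separate `p` from the (compact) convex hull by Hahn–Banach; the strict inequalities then hold on
an open set of vectors `ξ`. The vectors with `ℚ`-independent coordinates form a dense set: by
Baire, it is the countable intersection, over nonzero `q ∈ ℚ^m`, of the complements of the
hyperplanes `∑ q_j ξ_j = 0`. So the open set contains such a vector.
-/

open Matrix

theorem LinearMap.dense_setOf_ne_zero {𝕜 E F : Type*} [NontriviallyNormedField 𝕜]
    [AddCommGroup E] [Module 𝕜 E] [TopologicalSpace E] [ContinuousAdd E] [ContinuousSMul 𝕜 E]
    [AddCommGroup F] [Module 𝕜 F] {ℓ : E →ₗ[𝕜] F} (hℓ : ℓ ≠ 0) :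
    Dense {x | ℓ x ≠ 0} := by
  have hker : interior (LinearMap.ker ℓ : Set E) = ∅ := by
    by_contra h
    exact hℓ (LinearMap.ker_eq_top.mp
      ((LinearMap.ker ℓ).eq_top_of_nonempty_interior' (Set.nonempty_iff_ne_empty.mpr h)))
  exact interior_eq_empty_iff_dense_compl.mp hker

section

variable {ι : Type*} [Fintype ι]

theorem exists_forall_dotProduct_lt_of_notMem {C : Set (ι → ℝ)} {p : ι → ℝ}
    (hconv : Convex ℝ C) (hclosed : IsClosed C) (hp : p ∉ C) :
    ∃ ξ : ι → ℝ, ∀ x ∈ C, x ⬝ᵥ ξ < p ⬝ᵥ ξ := by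
  classical
  obtain ⟨f, u, hfC, hfp⟩ := geometric_hahn_banach_closed_point hconv hclosed hp
  have hf (y : ι → ℝ) : f y = y ⬝ᵥ fun i ↦ f fun j ↦ if i = j then 1 else 0 := by
    simpa [dotProduct] using LinearMap.pi_apply_eq_sum_univ (f : (ι → ℝ) →ₗ[ℝ] ℝ) y
  exact ⟨_, fun x hx ↦ hf x ▸ hf p ▸ (hfC x hx).trans hfp⟩

theorem isOpen_setOf_forall_dotProduct_lt {s : Set (ι → ℝ)} (hs : s.Finite) (p : ι → ℝ) :
    IsOpen {ξ : ι → ℝ | ∀ x ∈ s, x ⬝ᵥ ξ < p ⬝ᵥ ξ} := by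
  simp only [Set.ofPred_forall]
  exact hs.isOpen_biInter fun x _ ↦ isOpen_lt (by fun_prop) (by fun_prop)

theorem dense_setOf_sum_rat_smul_ne_zero {q : ι → ℚ} (hq : q ≠ 0) :
    Dense {ξ : ι → ℝ | ∑ j, q j • ξ j ≠ 0} := by
  classical
  let ℓ : (ι → ℝ) →ₗ[ℝ] ℝ := ∑ j, (q j : ℝ) • LinearMap.proj j
  have hℓ (ξ : ι → ℝ) : ℓ ξ = ∑ j, q j • ξ j := by
    simp [ℓ, Rat.smul_def]
  obtain ⟨j, hj⟩ := Function.ne_iff.mp hq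
  have hℓ0 : ℓ ≠ 0 := fun h ↦ hj <| by
    simpa [hℓ, Pi.single_apply] using LinearMap.congr_fun h (Pi.single j 1)
  simpa only [hℓ] using LinearMap.dense_setOf_ne_zero hℓ0

theorem dense_setOf_linearIndependent_rat :
    Dense {ξ : ι → ℝ | LinearIndependent ℚ ξ} := by
  have hD : Dense (⋂ q : {q : ι → ℚ // q ≠ 0}, {ξ : ι → ℝ | ∑ j, q.1 j • ξ j ≠ 0}) :=
    dense_iInter_of_isOpen (fun q ↦ isOpen_ne_fun (by fun_prop) continuous_const)
      fun q ↦ dense_setOf_sum_rat_smul_ne_zero q.2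
  refine hD.mono fun ξ hξ ↦ Fintype.linearIndependent_iff.mpr fun q hq ↦ ?_
  by_contra! hne
  exact Set.mem_iInter.mp hξ ⟨q, Function.ne_iff.mpr hne⟩ hq

end

/-- If a point `a ∈ ℝ^m` is not in the convex hull of `a₁, …, a_N`, then there is a
vector `ξ ∈ ℝ^m` whose coordinates are linearly independent over `ℚ` such that
`⟨a_i, ξ⟩ < ⟨a, ξ⟩` for all `i`. -/
theorem exists_rationally_independent_separating_vector {m N : ℕ}
    (a : Fin N → (Fin m → ℝ)) (p : Fin m → ℝ)
    (hp : p ∉ convexHull ℝ (Set.range a)) :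
    ∃ ξ : Fin m → ℝ, LinearIndependent ℚ ξ ∧
      ∀ i : Fin N, ∑ j, a i j * ξ j < ∑ j, p j * ξ j := by
  have hfin := Set.finite_range a
  obtain ⟨ξ₀, hξ₀⟩ := exists_forall_dotProduct_lt_of_notMem (convex_convexHull ℝ _)
    (hfin.isClosed_convexHull ℝ) hp
  obtain ⟨ξ, hsep, hξ⟩ := dense_setOf_linearIndependent_rat.inter_open_nonempty _
    (isOpen_setOf_forall_dotProduct_lt hfin p)
    ⟨ξ₀, fun x hx ↦ hξ₀ x (subset_convexHull ℝ _ hx)⟩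
  exact ⟨ξ, hξ, fun i ↦ hsep (a i) (Set.mem_range_self i)⟩
end
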